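/- Under the assumptions of the rough convolution lemma (α ∈ (1/3,1/2), 0 ≤ σ < α, α-Hölder rough path 𝐗, monotone family of interpolation spaces, semigroup bounds |(S(t)−Id)x|_η ≲ t^σ'|x|_{η+σ'} and |S(t)x|_{η+σ'} ≲ t^{−σ'}|x|_η for σ' ∈ [0,1]), for (y, y') ∈ D^{2α}_{X,γ} the path z_t := ∫₀ᵗ S(t−s) y_s d𝐗_s satisfies the supremum bound ‖z‖_{∞, B_{γ+σ}} ≲ T^{α−σ} ‖y, y'‖_{X,2α,γ}; in particular, for every t ∈ (0,T], |z_t|_{B_{γ+σ}} ≲ t^{α−σ}(|y₀|_{B_γ} + |y'₀|_{B_{γ−α}} + ‖y,y'‖_{X,2α,γ}). -/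

import Mathlib

open Set

/-- A monotone family of interpolation spaces: a scale `(B_θ)_{θ ∈ ℝ}` of separable Banach
spaces realised inside a common ambient real vector space `E`; `Mem θ x` means `x ∈ B_θ`,
`N θ x` denotes the norm `|x|_θ`.  For `β₁ ≤ β₂` the space `B_{β₂}` is contained in `B_{β₁}`
with dense and continuous embedding, and the interpolation inequality holds. -/
structure BanachScale where
  E : Type
  [inst_add : AddCommGroup E]
  [inst_mod : Module ℝ E]
  Mem : ℝ → E → Prop
  N : ℝ → E → ℝ
  mem_zero : ∀ θ : ℝ, Mem θ 0
  mem_add : ∀ (θ : ℝ) (x y : E), Mem θ x → Mem θ y → Mem θ (x + y)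
  mem_neg : ∀ (θ : ℝ) (x : E), Mem θ x → Mem θ (-x)
  mem_smul : ∀ (θ c : ℝ) (x : E), Mem θ x → Mem θ (c • x)
  N_nonneg : ∀ (θ : ℝ) (x : E), 0 ≤ N θ x
  N_zero : ∀ θ : ℝ, N θ 0 = 0
  N_eq_zero : ∀ (θ : ℝ) (x : E), Mem θ x → N θ x = 0 → x = 0
  N_add : ∀ (θ : ℝ) (x y : E), Mem θ x → Mem θ y → N θ (x + y) ≤ N θ x + N θ y
  N_smul : ∀ (θ c : ℝ) (x : E), N θ (c • x) = |c| * N θ x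
  mem_mono : ∀ ⦃β₁ β₂ : ℝ⦄, β₁ ≤ β₂ → ∀ x : E, Mem β₂ x → Mem β₁ x
  embed_bound : ∀ ⦃β₁ β₂ : ℝ⦄, β₁ ≤ β₂ → ∃ C > (0:ℝ), ∀ x : E, Mem β₂ x → N β₁ x ≤ C * N β₂ x
  embed_dense : ∀ ⦃β₁ β₂ : ℝ⦄, β₁ ≤ β₂ → ∀ x : E, Mem β₁ x → ∀ ε > (0:ℝ),
    ∃ y : E, Mem β₂ y ∧ N β₁ (x - y) < ε
  complete : ∀ (θ : ℝ) (u : ℕ → E), (∀ n, Mem θ (u n)) →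
    (∀ ε > (0:ℝ), ∃ M : ℕ, ∀ m ≥ M, ∀ n ≥ M, N θ (u m - u n) < ε) →
    ∃ x : E, Mem θ x ∧ ∀ ε > (0:ℝ), ∃ M : ℕ, ∀ n ≥ M, N θ (u n - x) < ε
  separable : ∀ θ : ℝ, ∃ D : Set E, D.Countable ∧ (∀ x ∈ D, Mem θ x) ∧
    ∀ x : E, Mem θ x → ∀ ε > (0:ℝ), ∃ y ∈ D, N θ (x - y) < ε
  interp : ∀ ⦃θ β γ : ℝ⦄, θ ≤ β → β ≤ γ → ∃ C > (0:ℝ), ∀ x : E, Mem γ x →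
    N β x ^ (γ - θ) ≤ C * (N θ x ^ (γ - β) * N γ x ^ (β - θ))

attribute [instance] BanachScale.inst_add BanachScale.inst_mod

/-- An analytic `C₀`-semigroup `(S(t))_{t ≥ 0}` acting on a scale of Banach spaces,
together with the standard parabolic bounds
`|(S(t) - Id)x|_η ≲ t^σ |x|_{η+σ}` and `|S(t)x|_{η+σ} ≲ t^{-σ} |x|_η` for `σ ∈ [0,1]`,
with constants uniform on compact time intervals. -/
structure ScaleSemigroup (𝓑 : BanachScale) where
  S : ℝ → 𝓑.E →ₗ[ℝ] 𝓑.E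
  S_id : ∀ x : 𝓑.E, S 0 x = x
  S_comp : ∀ s t : ℝ, 0 ≤ s → 0 ≤ t → ∀ x : 𝓑.E, S (s + t) x = S s (S t x)
  S_mem : ∀ (t θ : ℝ) (x : 𝓑.E), 0 ≤ t → 𝓑.Mem θ x → 𝓑.Mem θ (S t x)
  S_bounded : ∀ θ Tm : ℝ, 0 < Tm → ∃ C > (0:ℝ), ∀ (t : ℝ) (x : 𝓑.E), 0 ≤ t → t ≤ Tm →
    𝓑.Mem θ x → 𝓑.N θ (S t x) ≤ C * 𝓑.N θ x
  S_strong_cont : ∀ (θ : ℝ) (x : 𝓑.E), 𝓑.Mem θ x → ∀ ε > (0:ℝ), ∃ δ > (0:ℝ),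
    ∀ t : ℝ, 0 < t → t < δ → 𝓑.N θ (S t x - x) < ε
  S_smoothing : ∀ η σ Tm : ℝ, 0 ≤ σ → σ ≤ 1 → 0 < Tm → ∃ C > (0:ℝ),
    ∀ (t : ℝ) (x : 𝓑.E), 0 < t → t ≤ Tm → 𝓑.Mem η x →
      𝓑.Mem (η + σ) (S t x) ∧ 𝓑.N (η + σ) (S t x) ≤ C * t ^ (-σ) * 𝓑.N η x
  S_holdId : ∀ η σ Tm : ℝ, 0 ≤ σ → σ ≤ 1 → 0 < Tm → ∃ C > (0:ℝ),
    ∀ (t : ℝ) (x : 𝓑.E), 0 < t → t ≤ Tm → 𝓑.Mem (η + σ) x →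
      𝓑.N η (S t x - x) ≤ C * t ^ σ * 𝓑.N (η + σ) x

/-- A (one-dimensional) `α`-Hölder rough path `𝐗 = (X, X⁽²⁾)` on `[0,T]`:
`X ∈ C^α`, `X₀ = 0`, `X⁽²⁾ ∈ C^{2α}` on the simplex, satisfying Chen's relation. -/
structure RoughPath (α T : ℝ) where
  X : ℝ → ℝ
  X2 : ℝ → ℝ → ℝ
  X_zero : X 0 = 0
  holderX : ∃ C : ℝ, ∀ s t : ℝ, 0 ≤ s → s ≤ t → t ≤ T → |X t - X s| ≤ C * (t - s) ^ α
  holderX2 : ∃ C : ℝ, ∀ s t : ℝ, 0 ≤ s → s ≤ t → t ≤ T → |X2 s t| ≤ C * (t - s) ^ (2 * α)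
  chen : ∀ s u t : ℝ, 0 ≤ s → s ≤ u → u ≤ t → t ≤ T →
    X2 s t - X2 s u - X2 u t = (X u - X s) * (X t - X u)

/-- The supremum norm `‖f‖_{∞, B_θ}` over `[0,T]`. -/
noncomputable def scaleSupNorm (𝓑 : BanachScale) (θ T : ℝ) (f : ℝ → 𝓑.E) : ℝ :=
  sSup {r : ℝ | ∃ t : ℝ, 0 ≤ t ∧ t ≤ T ∧ r = 𝓑.N θ (f t)}

/-- The `η`-Hölder seminorm (in `B_θ`) of a two-parameter function on `[0,T]`. -/
noncomputable def scaleHolderNorm2 (𝓑 : BanachScale) (θ η T : ℝ) (F : ℝ → ℝ → 𝓑.E) : ℝ :=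
  sSup {r : ℝ | ∃ s t : ℝ, 0 ≤ s ∧ s < t ∧ t ≤ T ∧ r = 𝓑.N θ (F s t) / (t - s) ^ η}

/-- The `η`-Hölder seminorm `‖f‖_{η, B_θ}` over `[0,T]`. -/
noncomputable def scaleHolderNorm (𝓑 : BanachScale) (θ η T : ℝ) (f : ℝ → 𝓑.E) : ℝ :=
  scaleHolderNorm2 𝓑 θ η T fun s t => f t - f s

/-- The `η`-Hölder seminorm of a real-valued path on `[0,T]`. -/
noncomputable def realHolderNorm (η T : ℝ) (X : ℝ → ℝ) : ℝ :=
  sSup {r : ℝ | ∃ s t : ℝ, 0 ≤ s ∧ s < t ∧ t ≤ T ∧ r = |X t - X s| / (t - s) ^ η}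

/-- `f : [0,T] → B_θ` is `η`-Hölder continuous. -/
def IsHolderOn (𝓑 : BanachScale) (θ η T : ℝ) (f : ℝ → 𝓑.E) : Prop :=
  ∃ C : ℝ, ∀ s t : ℝ, 0 ≤ s → s ≤ t → t ≤ T → 𝓑.N θ (f t - f s) ≤ C * (t - s) ^ η

/-- The remainder `R^y_{s,t} = y_t - y_s - y'_s X_{s,t}` of a controlled rough path. -/
def gubRemainder (𝓑 : BanachScale) (X : ℝ → ℝ) (y y' : ℝ → 𝓑.E) (s t : ℝ) : 𝓑.E :=
  y t - y s - (X t - X s) • y' s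

/-- `(y, y')` is a controlled rough path in `D^{2α}_{X,γ}([0,T])`:
`y ∈ C([0,T]; B_γ)`, `y' ∈ C([0,T]; B_{γ-α}) ∩ C^α([0,T]; B_{γ-2α})` and the remainder
`R^y ∈ C^α([0,T]; B_{γ-α}) ∩ C^{2α}([0,T]; B_{γ-2α})`. -/
structure IsControlledPath (𝓑 : BanachScale) (α γ T : ℝ) (X : ℝ → ℝ)
    (y y' : ℝ → 𝓑.E) : Prop where
  mem_y : ∀ t : ℝ, 0 ≤ t → t ≤ T → 𝓑.Mem γ (y t)
  mem_y' : ∀ t : ℝ, 0 ≤ t → t ≤ T → 𝓑.Mem (γ - α) (y' t)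
  cont_y : ∀ t : ℝ, 0 ≤ t → t ≤ T → ∀ ε > (0:ℝ), ∃ δ > (0:ℝ), ∀ s : ℝ, 0 ≤ s → s ≤ T →
    |s - t| < δ → 𝓑.N γ (y s - y t) < ε
  cont_y' : ∀ t : ℝ, 0 ≤ t → t ≤ T → ∀ ε > (0:ℝ), ∃ δ > (0:ℝ), ∀ s : ℝ, 0 ≤ s → s ≤ T →
    |s - t| < δ → 𝓑.N (γ - α) (y' s - y' t) < ε
  holder_y' : ∃ C : ℝ, ∀ s t : ℝ, 0 ≤ s → s ≤ t → t ≤ T →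
    𝓑.N (γ - 2 * α) (y' t - y' s) ≤ C * (t - s) ^ α
  rem_alpha : ∃ C : ℝ, ∀ s t : ℝ, 0 ≤ s → s ≤ t → t ≤ T →
    𝓑.N (γ - α) (gubRemainder 𝓑 X y y' s t) ≤ C * (t - s) ^ α
  rem_two_alpha : ∃ C : ℝ, ∀ s t : ℝ, 0 ≤ s → s ≤ t → t ≤ T →
    𝓑.N (γ - 2 * α) (gubRemainder 𝓑 X y y' s t) ≤ C * (t - s) ^ (2 * α)

/-- The norm `‖(y,y')‖_{X,2α,γ}` on `D^{2α}_{X,γ}([0,T])`. -/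
noncomputable def crpNorm (𝓑 : BanachScale) (α γ T : ℝ) (X : ℝ → ℝ)
    (y y' : ℝ → 𝓑.E) : ℝ :=
  scaleSupNorm 𝓑 γ T y + scaleSupNorm 𝓑 (γ - α) T y'
    + scaleHolderNorm 𝓑 (γ - 2 * α) α T y'
    + scaleHolderNorm2 𝓑 (γ - α) α T (gubRemainder 𝓑 X y y')
    + scaleHolderNorm2 𝓑 (γ - 2 * α) (2 * α) T (gubRemainder 𝓑 X y y')

/-- A partition `a = t_0 < t_1 < ⋯ < t_n = b` of the interval `[a,b]`. -/
structure RPartition (a b : ℝ) where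
  n : ℕ
  t : ℕ → ℝ
  n_pos : 0 < n
  strict : ∀ i : ℕ, i < n → t i < t (i + 1)
  first : t 0 = a
  last : t n = b

/-- The mesh `|π|` of a partition. -/
noncomputable def RPartition.mesh {a b : ℝ} (π : RPartition a b) : ℝ :=
  sSup {r : ℝ | ∃ i : ℕ, i < π.n ∧ r = π.t (i + 1) - π.t i}

/-- The compensated Riemann sum `Σ_{[u,v] ∈ π} S(b - u)[y_u X_{u,v} + y'_u X⁽²⁾_{u,v}]`. -/
noncomputable def convRiemannSum (𝓑 : BanachScale) (Sg : ScaleSemigroup 𝓑)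
    (X : ℝ → ℝ) (X2 : ℝ → ℝ → ℝ) (y y' : ℝ → 𝓑.E) {a b : ℝ} (π : RPartition a b) : 𝓑.E :=
  ∑ i ∈ Finset.range π.n,
    Sg.S (b - π.t i)
      ((X (π.t (i + 1)) - X (π.t i)) • y (π.t i) + X2 (π.t i) (π.t (i + 1)) • y' (π.t i))

/-- `I` is the rough convolution `∫_a^b S(b-r) y_r d𝐗_r`, i.e. the limit in `B_θ` of the
compensated Riemann sums over partitions of `[a,b]` with vanishing mesh. -/
def IsRoughConvolution (𝓑 : BanachScale) (Sg : ScaleSemigroup 𝓑) (X : ℝ → ℝ)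
    (X2 : ℝ → ℝ → ℝ) (y y' : ℝ → 𝓑.E) (θ a b : ℝ) (I : 𝓑.E) : Prop :=
  𝓑.Mem θ I ∧ ∀ ε > (0:ℝ), ∃ δ > (0:ℝ), ∀ π : RPartition a b, π.mesh < δ →
    𝓑.N θ (convRiemannSum 𝓑 Sg X X2 y y' π - I) ≤ ε

/-- Left Riemann sum of a `B`-valued function. -/
noncomputable def intRiemannSum (𝓑 : BanachScale) (f : ℝ → 𝓑.E) {a b : ℝ}
    (π : RPartition a b) : 𝓑.E :=
  ∑ i ∈ Finset.range π.n, (π.t (i + 1) - π.t i) • f (π.t i)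

/-- `I = ∫_a^b f(s) ds` as a `B_θ`-valued Riemann integral. -/
def IsRiemannIntegral (𝓑 : BanachScale) (θ : ℝ) (f : ℝ → 𝓑.E) (a b : ℝ) (I : 𝓑.E) : Prop :=
  𝓑.Mem θ I ∧ ∀ ε > (0:ℝ), ∃ δ > (0:ℝ), ∀ π : RPartition a b, π.mesh < δ →
    𝓑.N θ (intRiemannSum 𝓑 f π - I) ≤ ε

/-- Assumption (F): the drift `F : B_γ → B_{γ-δ}` is locally Lipschitz continuous and
satisfies a linear growth condition. -/
structure AssumptionF (𝓑 : BanachScale) (γ δ : ℝ) (F : 𝓑.E → 𝓑.E) : Prop where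
  maps : ∀ x : 𝓑.E, 𝓑.Mem γ x → 𝓑.Mem (γ - δ) (F x)
  locLip : ∀ R > (0:ℝ), ∃ L : ℝ, ∀ x y : 𝓑.E, 𝓑.Mem γ x → 𝓑.Mem γ y →
    𝓑.N γ x ≤ R → 𝓑.N γ y ≤ R → 𝓑.N (γ - δ) (F x - F y) ≤ L * 𝓑.N γ (x - y)
  linGrowth : ∃ C : ℝ, ∀ x : 𝓑.E, 𝓑.Mem γ x → 𝓑.N (γ - δ) (F x) ≤ C * (1 + 𝓑.N γ x)

/-- Assumption (G): for `θ ∈ {0, α, 2α}` the diffusion coefficient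
`G : B_{γ-θ} → B_{γ-θ-σ}` is three times continuously (Fréchet) differentiable with bounded
derivatives `DG`, `D²G`, `D³G`, and the derivative of `x ↦ DG(x)G(x) : B_{γ-α} → B_{γ-2α-σ}`
is bounded. -/
structure AssumptionG (𝓑 : BanachScale) (α σ γ : ℝ) (G : 𝓑.E → 𝓑.E)
    (DG : 𝓑.E → 𝓑.E →ₗ[ℝ] 𝓑.E)
    (D2G : 𝓑.E → 𝓑.E →ₗ[ℝ] 𝓑.E →ₗ[ℝ] 𝓑.E)
    (D3G : 𝓑.E → 𝓑.E →ₗ[ℝ] 𝓑.E →ₗ[ℝ] 𝓑.E →ₗ[ℝ] 𝓑.E) : Prop where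
  maps : ∀ θ ∈ ({0, α, 2 * α} : Set ℝ), ∀ x : 𝓑.E, 𝓑.Mem (γ - θ) x → 𝓑.Mem (γ - θ - σ) (G x)
  DG_maps : ∀ θ ∈ ({0, α, 2 * α} : Set ℝ), ∀ x h : 𝓑.E, 𝓑.Mem (γ - θ) x → 𝓑.Mem (γ - θ) h →
    𝓑.Mem (γ - θ - σ) (DG x h)
  DG_bound : ∀ θ ∈ ({0, α, 2 * α} : Set ℝ), ∃ C : ℝ, ∀ x h : 𝓑.E, 𝓑.Mem (γ - θ) x →
    𝓑.Mem (γ - θ) h → 𝓑.N (γ - θ - σ) (DG x h) ≤ C * 𝓑.N (γ - θ) h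
  DG_isDeriv : ∀ θ ∈ ({0, α, 2 * α} : Set ℝ), ∀ x : 𝓑.E, 𝓑.Mem (γ - θ) x → ∀ ε > (0:ℝ),
    ∃ δ > (0:ℝ), ∀ h : 𝓑.E, 𝓑.Mem (γ - θ) h → 𝓑.N (γ - θ) h < δ →
      𝓑.N (γ - θ - σ) (G (x + h) - G x - DG x h) ≤ ε * 𝓑.N (γ - θ) h
  D2G_maps : ∀ θ ∈ ({0, α, 2 * α} : Set ℝ), ∀ x h k : 𝓑.E, 𝓑.Mem (γ - θ) x →
    𝓑.Mem (γ - θ) h → 𝓑.Mem (γ - θ) k → 𝓑.Mem (γ - θ - σ) (D2G x h k)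
  D2G_bound : ∀ θ ∈ ({0, α, 2 * α} : Set ℝ), ∃ C : ℝ, ∀ x h k : 𝓑.E, 𝓑.Mem (γ - θ) x →
    𝓑.Mem (γ - θ) h → 𝓑.Mem (γ - θ) k →
    𝓑.N (γ - θ - σ) (D2G x h k) ≤ C * (𝓑.N (γ - θ) h * 𝓑.N (γ - θ) k)
  D2G_isDeriv : ∀ θ ∈ ({0, α, 2 * α} : Set ℝ), ∀ x : 𝓑.E, 𝓑.Mem (γ - θ) x → ∀ ε > (0:ℝ),
    ∃ δ > (0:ℝ), ∀ h : 𝓑.E, 𝓑.Mem (γ - θ) h → 𝓑.N (γ - θ) h < δ → ∀ k : 𝓑.E,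
      𝓑.Mem (γ - θ) k →
      𝓑.N (γ - θ - σ) (DG (x + h) k - DG x k - D2G x h k) ≤ ε * (𝓑.N (γ - θ) h * 𝓑.N (γ - θ) k)
  D3G_maps : ∀ θ ∈ ({0, α, 2 * α} : Set ℝ), ∀ x h k l : 𝓑.E, 𝓑.Mem (γ - θ) x →
    𝓑.Mem (γ - θ) h → 𝓑.Mem (γ - θ) k → 𝓑.Mem (γ - θ) l → 𝓑.Mem (γ - θ - σ) (D3G x h k l)
  D3G_bound : ∀ θ ∈ ({0, α, 2 * α} : Set ℝ), ∃ C : ℝ, ∀ x h k l : 𝓑.E, 𝓑.Mem (γ - θ) x →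
    𝓑.Mem (γ - θ) h → 𝓑.Mem (γ - θ) k → 𝓑.Mem (γ - θ) l →
    𝓑.N (γ - θ - σ) (D3G x h k l) ≤ C * (𝓑.N (γ - θ) h * (𝓑.N (γ - θ) k * 𝓑.N (γ - θ) l))
  D3G_isDeriv : ∀ θ ∈ ({0, α, 2 * α} : Set ℝ), ∀ x : 𝓑.E, 𝓑.Mem (γ - θ) x → ∀ ε > (0:ℝ),
    ∃ δ > (0:ℝ), ∀ h : 𝓑.E, 𝓑.Mem (γ - θ) h → 𝓑.N (γ - θ) h < δ → ∀ k l : 𝓑.E,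
      𝓑.Mem (γ - θ) k → 𝓑.Mem (γ - θ) l →
      𝓑.N (γ - θ - σ) (D2G (x + h) k l - D2G x k l - D3G x h k l)
        ≤ ε * (𝓑.N (γ - θ) h * (𝓑.N (γ - θ) k * 𝓑.N (γ - θ) l))
  D3G_cont : ∀ θ ∈ ({0, α, 2 * α} : Set ℝ), ∀ x : 𝓑.E, 𝓑.Mem (γ - θ) x → ∀ ε > (0:ℝ),
    ∃ δ > (0:ℝ), ∀ x' : 𝓑.E, 𝓑.Mem (γ - θ) x' → 𝓑.N (γ - θ) (x' - x) < δ →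
      ∀ h k l : 𝓑.E, 𝓑.Mem (γ - θ) h → 𝓑.Mem (γ - θ) k → 𝓑.Mem (γ - θ) l →
      𝓑.N (γ - θ - σ) (D3G x' h k l - D3G x h k l)
        ≤ ε * (𝓑.N (γ - θ) h * (𝓑.N (γ - θ) k * 𝓑.N (γ - θ) l))
  DGG_deriv_bounded : ∃ (L : 𝓑.E → 𝓑.E →ₗ[ℝ] 𝓑.E) (C : ℝ),
    (∀ x h : 𝓑.E, 𝓑.Mem (γ - α) x → 𝓑.Mem (γ - α) h →
      𝓑.Mem (γ - 2 * α - σ) (L x h) ∧ 𝓑.N (γ - 2 * α - σ) (L x h) ≤ C * 𝓑.N (γ - α) h) ∧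
    ∀ x : 𝓑.E, 𝓑.Mem (γ - α) x → ∀ ε > (0:ℝ), ∃ δ > (0:ℝ), ∀ h : 𝓑.E, 𝓑.Mem (γ - α) h →
      𝓑.N (γ - α) h < δ →
      𝓑.N (γ - 2 * α - σ) (DG (x + h) (G (x + h)) - DG x (G x) - L x h) ≤ ε * 𝓑.N (γ - α) h

/-- `y` is a (mild) solution on `[0,T']` of the rough evolution equation
`dy = (Ay + F(y))dt + G(y)d𝐗`, `y(0) = y₀`: the pair `(y, G(y))` is a controlled rough
path in `D^{2α}_{X,γ}([0,T'])` and the mild formulation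
`y_t = S(t)y₀ + ∫₀ᵗ S(t-s)F(y_s)ds + ∫₀ᵗ S(t-s)G(y_s)d𝐗_s` holds, the rough convolution
being the limit of the compensated Riemann sums
`Σ S(t-u)[G(y_u)X_{u,v} + DG(y_u)G(y_u)X⁽²⁾_{u,v}]`. -/
structure IsSolution (𝓑 : BanachScale) (Sg : ScaleSemigroup 𝓑) (α γ : ℝ)
    (X : ℝ → ℝ) (X2 : ℝ → ℝ → ℝ) (F G : 𝓑.E → 𝓑.E) (DG : 𝓑.E → 𝓑.E →ₗ[ℝ] 𝓑.E)
    (y₀ : 𝓑.E) (T' : ℝ) (y : ℝ → 𝓑.E) : Prop where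
  controlled : IsControlledPath 𝓑 α γ T' X y fun t => G (y t)
  init : y 0 = y₀
  mild : ∀ t : ℝ, 0 < t → t ≤ T' → ∃ D Z : 𝓑.E,
    IsRiemannIntegral 𝓑 γ (fun s => Sg.S (t - s) (F (y s))) 0 t D ∧
    IsRoughConvolution 𝓑 Sg X X2 (fun s => G (y s)) (fun s => DG (y s) (G (y s)))
      (γ - 2 * α) 0 t Z ∧
    y t = Sg.S t y₀ + D + Z

/-- The Borel σ-algebra of `B_θ`, generated by the `|·|_θ`-balls of `B_θ`,
as a σ-algebra on the ambient space. -/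
def scaleBorel (𝓑 : BanachScale) (θ : ℝ) : MeasurableSpace 𝓑.E :=
  MeasurableSpace.generateFrom
    {s : Set 𝓑.E | ∃ (c : 𝓑.E) (r : ℝ), s = {x | 𝓑.Mem θ x ∧ 𝓑.N θ (x - c) < r}}


/-!
The rough convolution `z_t` is the limit of the compensated Riemann sums of the germ
`Ξ_{a,b} = S(t-a)[y_a X_{a,b} + y'_a X⁽²⁾_{a,b}]`; we follow them along the dyadic partitions of
`[0,t]`. Refining a dyadic level changes the sum by the defects
`δΞ_{a,m,b} = Ξ_{a,m} + Ξ_{m,b} - Ξ_{a,b}`, `m - a = b - m = h`. By Chen's relation, `δΞ_{a,m,b}` is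
`S(t-m)` applied to vectors of size `h^{3α}`, `h^{1+2α}` and `h^{1+α}` in `B_{γ-2α}`,
`B_{γ-α-1}` and `B_{γ-1}` (remainder, increment of `y'`, and `(Id - S(h))` applied to `y`, `y'`),
so analytic smoothing gives `|δΞ_{a,m,b}|_{γ+σ} ≲ ‖y,y'‖ (h/(t-m))^θ h^{α-σ}` for a fixed
`θ ∈ (1-(α-σ), 1)`. Summed over a level this is `≲ t^{α-σ} 2^{-k(θ+α-σ-1)}`, so the dyadic sums
converge in `B_{γ+σ}`; their limit is `z_t` because `B_{γ+σ}` embeds continuously into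
`B_{γ-2α}`, where the Riemann sums converge to `z_t`. The coarsest sum `Ξ_{0,t}` contributes
`t^{α-σ}(|y₀|_γ + |y'₀|_{γ-α})`.
-/

open Filter Topology

namespace BanachScale

variable {𝓑 : BanachScale} {θ : ℝ}

lemma N_neg (x : 𝓑.E) : 𝓑.N θ (-x) = 𝓑.N θ x := by
  simpa using 𝓑.N_smul θ (-1) x

lemma N_sub_comm (x y : 𝓑.E) : 𝓑.N θ (x - y) = 𝓑.N θ (y - x) := by
  rw [← N_neg, neg_sub]

lemma mem_sub {x y : 𝓑.E} (hx : 𝓑.Mem θ x) (hy : 𝓑.Mem θ y) : 𝓑.Mem θ (x - y) := by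
  simpa [sub_eq_add_neg] using 𝓑.mem_add θ x (-y) hx (𝓑.mem_neg θ y hy)

lemma N_sub_le {x y : 𝓑.E} (hx : 𝓑.Mem θ x) (hy : 𝓑.Mem θ y) :
    𝓑.N θ (x - y) ≤ 𝓑.N θ x + 𝓑.N θ y := by
  simpa [sub_eq_add_neg, N_neg] using 𝓑.N_add θ x (-y) hx (𝓑.mem_neg θ y hy)

lemma abs_N_sub_N_le {x y : 𝓑.E} (hx : 𝓑.Mem θ x) (hy : 𝓑.Mem θ y) :
    |𝓑.N θ x - 𝓑.N θ y| ≤ 𝓑.N θ (x - y) := by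
  have h₁ := 𝓑.N_add θ y (x - y) hy (mem_sub hx hy)
  have h₂ := N_sub_le hx (mem_sub hx hy)
  rw [add_sub_cancel] at h₁
  rw [sub_sub_cancel] at h₂
  exact abs_sub_le_iff.mpr ⟨by linarith, by linarith⟩

lemma mem_sum {ι : Type*} (s : Finset ι) {f : ι → 𝓑.E} (hf : ∀ i ∈ s, 𝓑.Mem θ (f i)) :
    𝓑.Mem θ (∑ i ∈ s, f i) := by
  classical
  induction s using Finset.induction_on with
  | empty => simpa using 𝓑.mem_zero θ
  | insert a s ha ih =>
    rw [Finset.sum_insert ha]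
    exact 𝓑.mem_add θ _ _ (hf a (by simp)) (ih fun i hi => hf i (by simp [hi]))

lemma N_sum_le {ι : Type*} (s : Finset ι) {f : ι → 𝓑.E} (hf : ∀ i ∈ s, 𝓑.Mem θ (f i)) :
    𝓑.N θ (∑ i ∈ s, f i) ≤ ∑ i ∈ s, 𝓑.N θ (f i) := by
  classical
  induction s using Finset.induction_on with
  | empty => simp [𝓑.N_zero]
  | insert a s ha ih =>
    rw [Finset.sum_insert ha, Finset.sum_insert ha]
    have hs : ∀ i ∈ s, 𝓑.Mem θ (f i) := fun i hi => hf i (by simp [hi])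
    exact (𝓑.N_add θ _ _ (hf a (by simp)) (mem_sum s hs)).trans (by gcongr; exact ih hs)

lemma mem_add_and_N_add_le {x y : 𝓑.E} {a b : ℝ} (hx : 𝓑.Mem θ x ∧ 𝓑.N θ x ≤ a)
    (hy : 𝓑.Mem θ y ∧ 𝓑.N θ y ≤ b) : 𝓑.Mem θ (x + y) ∧ 𝓑.N θ (x + y) ≤ a + b :=
  ⟨𝓑.mem_add θ x y hx.1 hy.1, (𝓑.N_add θ x y hx.1 hy.1).trans (add_le_add hx.2 hy.2)⟩

lemma N_smul_le_mul_rpow {c A B p q e h : ℝ} {v : 𝓑.E} (hh : 0 < h) (hc : |c| ≤ A * h ^ p)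
    (hv : 𝓑.N θ v ≤ B * h ^ q) (he : p + q = e) : 𝓑.N θ (c • v) ≤ A * B * h ^ e := by
  rw [𝓑.N_smul, ← he, Real.rpow_add hh]
  calc |c| * 𝓑.N θ v ≤ A * h ^ p * (B * h ^ q) :=
        mul_le_mul hc hv (𝓑.N_nonneg θ v) ((abs_nonneg c).trans hc)
    _ = A * B * (h ^ p * h ^ q) := by ring

lemma tendsto_N_sub_iff {u : ℕ → 𝓑.E} {z : 𝓑.E} :
    Tendsto (fun n => 𝓑.N θ (u n - z)) atTop (𝓝 0) ↔
      ∀ ε > (0:ℝ), ∃ M : ℕ, ∀ n ≥ M, 𝓑.N θ (u n - z) < ε := by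
  simp [Metric.tendsto_atTop, abs_of_nonneg (𝓑.N_nonneg _ _)]

lemma N_sub_le_of_geometric {D : ℕ → 𝓑.E} {A r : ℝ} (hr0 : 0 ≤ r) (hr1 : r < 1)
    (hinc : ∀ k, 𝓑.Mem θ (D (k + 1) - D k) ∧ 𝓑.N θ (D (k + 1) - D k) ≤ A * r ^ k)
    {n m : ℕ} (hnm : n ≤ m) : 𝓑.N θ (D m - D n) ≤ A * (r ^ n / (1 - r)) := by
  have hA : 0 ≤ A := by simpa using (𝓑.N_nonneg θ _).trans (hinc 0).2
  rw [← Finset.sum_Ico_sub D hnm]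
  calc 𝓑.N θ (∑ j ∈ Finset.Ico n m, (D (j + 1) - D j))
      ≤ ∑ j ∈ Finset.Ico n m, 𝓑.N θ (D (j + 1) - D j) := N_sum_le _ fun j _ => (hinc j).1
    _ ≤ ∑ j ∈ Finset.Ico n m, A * r ^ j := Finset.sum_le_sum fun j _ => (hinc j).2
    _ ≤ A * (r ^ n / (1 - r)) := by
        rw [← Finset.mul_sum]
        exact mul_le_mul_of_nonneg_left (geom_sum_Ico_le_of_lt_one hr0 hr1) hA

lemma exists_tendsto_of_geometric {D : ℕ → 𝓑.E} {A r : ℝ} (hr0 : 0 ≤ r) (hr1 : r < 1)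
    (hD0 : 𝓑.Mem θ (D 0))
    (hinc : ∀ k, 𝓑.Mem θ (D (k + 1) - D k) ∧ 𝓑.N θ (D (k + 1) - D k) ≤ A * r ^ k) :
    (∀ k, 𝓑.Mem θ (D k)) ∧ ∃ z, 𝓑.Mem θ z ∧ Tendsto (fun k => 𝓑.N θ (D k - z)) atTop (𝓝 0) ∧
      𝓑.N θ z ≤ 𝓑.N θ (D 0) + A / (1 - r) := by
  have hmem : ∀ k, 𝓑.Mem θ (D k) := fun k => by
    rw [← sub_add_cancel (D k) (D 0), ← Finset.sum_range_sub]
    exact 𝓑.mem_add θ _ _ (mem_sum _ fun j _ => (hinc j).1) hD0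
  have htail := fun {n m : ℕ} (hnm : n ≤ m) => N_sub_le_of_geometric hr0 hr1 hinc hnm
  have hcauchy : ∀ ε > (0:ℝ), ∃ M : ℕ, ∀ m ≥ M, ∀ n ≥ M, 𝓑.N θ (D m - D n) < ε := by
    intro ε hε
    have hlim : Tendsto (fun n => A * (r ^ n / (1 - r))) atTop (𝓝 0) := by
      simpa using ((tendsto_pow_atTop_nhds_zero_of_lt_one hr0 hr1).div_const (1 - r)).const_mul A
    obtain ⟨M, hM⟩ := eventually_atTop.mp (hlim.eventually (gt_mem_nhds hε))
    refine ⟨M, fun m hm n hn => ?_⟩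
    rcases le_total n m with hnm | hmn
    · exact (htail hnm).trans_lt (hM n hn)
    · rw [N_sub_comm]; exact (htail hmn).trans_lt (hM m hm)
  obtain ⟨z, hz, hDz⟩ := 𝓑.complete θ D hmem hcauchy
  have hDz' := tendsto_N_sub_iff.mpr hDz
  refine ⟨hmem, z, hz, hDz', ge_of_tendsto' (by simpa using hDz'.const_add _) fun k => ?_⟩
  calc 𝓑.N θ z = 𝓑.N θ (D 0 + (D k - D 0) - (D k - z)) := by congr 1; abel
    _ ≤ 𝓑.N θ (D 0) + 𝓑.N θ (D k - D 0) + 𝓑.N θ (D k - z) :=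
        (N_sub_le (𝓑.mem_add θ _ _ hD0 (mem_sub (hmem k) hD0)) (mem_sub (hmem k) hz)).trans
          (by gcongr; exact 𝓑.N_add θ _ _ hD0 (mem_sub (hmem k) hD0))
    _ ≤ 𝓑.N θ (D 0) + A / (1 - r) + 𝓑.N θ (D k - z) := by
        gcongr; simpa [div_eq_mul_inv] using htail (Nat.zero_le k)

lemma eq_of_tendsto {ρ' ρ : ℝ} (hρ : ρ' ≤ ρ) {D : ℕ → 𝓑.E} (hD : ∀ k, 𝓑.Mem ρ (D k))
    {z z' : 𝓑.E} (hz : 𝓑.Mem ρ' z) (hz' : 𝓑.Mem ρ z')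
    (hDz : Tendsto (fun k => 𝓑.N ρ' (D k - z)) atTop (𝓝 0))
    (hDz' : Tendsto (fun k => 𝓑.N ρ (D k - z')) atTop (𝓝 0)) : z = z' := by
  obtain ⟨C, -, hC⟩ := 𝓑.embed_bound hρ
  have hmem : 𝓑.Mem ρ' (z - z') := mem_sub hz (𝓑.mem_mono hρ z' hz')
  have hbound : ∀ k, 𝓑.N ρ' (z - z') ≤ 𝓑.N ρ' (D k - z) + C * 𝓑.N ρ (D k - z') := by
    intro k
    have hDk := 𝓑.mem_mono hρ _ (hD k)
    calc 𝓑.N ρ' (z - z') = 𝓑.N ρ' ((D k - z') - (D k - z)) := by congr 1; abel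
      _ ≤ 𝓑.N ρ' (D k - z') + 𝓑.N ρ' (D k - z) :=
          N_sub_le (mem_sub hDk (𝓑.mem_mono hρ z' hz')) (mem_sub hDk hz)
      _ ≤ _ := by linarith [hC _ (mem_sub (hD k) hz')]
  have hlim : Tendsto (fun k => 𝓑.N ρ' (D k - z) + C * 𝓑.N ρ (D k - z')) atTop (𝓝 0) := by
    simpa using hDz.add (hDz'.const_mul C)
  have hle : 𝓑.N ρ' (z - z') ≤ 0 := ge_of_tendsto' hlim hbound
  exact sub_eq_zero.mp (𝓑.N_eq_zero ρ' _ hmem (hle.antisymm (𝓑.N_nonneg ρ' _)))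

end BanachScale

open BanachScale

lemma Set.Finite.exists_forall_of_monotone {ι : Type*} {s : Set ι} (hs : s.Finite)
    {P : ι → ℝ → Prop} (hP : ∀ i C C', C ≤ C' → P i C → P i C') (h : ∀ i ∈ s, ∃ C, P i C) :
    ∃ C ≥ 0, ∀ i ∈ s, P i C := by
  choose! C hC using h
  obtain ⟨M, hM⟩ := (hs.image C).bddAbove
  exact ⟨max M 0, le_max_right _ _, fun i hi =>
    hP i _ _ ((hM ⟨i, hi, rfl⟩).trans (le_max_left _ _)) (hC i hi)⟩

lemma one_sub_mul_rpow_neg_le {θ x : ℝ} (hθ0 : 0 ≤ θ) (hθ1 : θ ≤ 1) (hx : 0 ≤ x) :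
    (1 - θ) * (x + 1) ^ (-θ) ≤ (x + 1) ^ (1 - θ) - x ^ (1 - θ) := by
  have hy : 0 < x + 1 := by linarith
  have hs : -1 ≤ -(x + 1)⁻¹ := neg_le_neg (inv_le_one_of_one_le₀ (by linarith))
  -- Bernoulli's inequality for the concave power `1 - θ`
  have hbern := rpow_one_add_le_one_add_mul_self hs (by linarith : 0 ≤ 1 - θ) (by linarith)
  have hxy : x = (x + 1) * (1 + -(x + 1)⁻¹) := by field_simp; ring
  have hpow : (x + 1) ^ (-θ) = (x + 1) ^ (1 - θ) * (x + 1)⁻¹ := by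
    rw [sub_eq_add_neg, Real.rpow_add hy, Real.rpow_one]; field_simp
  calc (1 - θ) * (x + 1) ^ (-θ)
      = (x + 1) ^ (1 - θ) - (x + 1) ^ (1 - θ) * (1 + (1 - θ) * -(x + 1)⁻¹) := by
        rw [hpow]; ring
    _ ≤ (x + 1) ^ (1 - θ) - (x + 1) ^ (1 - θ) * (1 + -(x + 1)⁻¹) ^ (1 - θ) := by gcongr
    _ = (x + 1) ^ (1 - θ) - x ^ (1 - θ) := by
        rw [← Real.mul_rpow hy.le (by linarith), ← hxy]

lemma sum_range_rpow_neg_le {θ : ℝ} (hθ0 : 0 ≤ θ) (hθ1 : θ < 1) (n : ℕ) :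
    ∑ i ∈ Finset.range n, ((i : ℝ) + 1) ^ (-θ) ≤ (n : ℝ) ^ (1 - θ) / (1 - θ) := by
  induction n with
  | zero => simp [Real.zero_rpow (by linarith : 1 - θ ≠ 0)]
  | succ n ih =>
    rw [Finset.sum_range_succ, Nat.cast_succ, le_div_iff₀ (by linarith), add_mul]
    have := one_sub_mul_rpow_neg_le hθ0 hθ1.le (Nat.cast_nonneg n)
    have := (le_div_iff₀ (by linarith : 0 < 1 - θ)).mp ih
    linarith

lemma sum_range_div_rpow_le {θ h : ℝ} (hθ0 : 0 ≤ θ) (hθ1 : θ < 1) (hh : 0 < h) (n : ℕ) :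
    ∑ i ∈ Finset.range n, (h / (2 * n * h - (2 * i * h + h))) ^ θ
      ≤ (n : ℝ) ^ (1 - θ) / (1 - θ) := by
  rw [← Finset.sum_range_reflect]
  refine le_trans (Finset.sum_le_sum fun i hi => ?_) (sum_range_rpow_neg_le hθ0 hθ1 n)
  have hin : i + 1 ≤ n := Finset.mem_range.mp hi
  have hj : ((n - 1 - i : ℕ) : ℝ) = n - 1 - i := by
    rw [Nat.cast_sub (by omega), Nat.cast_sub (by omega), Nat.cast_one]
  have hi1 : (i : ℝ) + 1 ≤ n := by exact_mod_cast hin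
  have hpos : (0 : ℝ) < i + 1 := by positivity
  rw [hj, show 2 * n * h - (2 * (n - 1 - i) * h + h) = (2 * i + 1) * h by ring,
    div_mul_cancel_right₀ hh.ne', Real.rpow_neg hpos.le, ← Real.inv_rpow hpos.le]
  exact Real.rpow_le_rpow (by positivity) (inv_anti₀ hpos (by linarith)) hθ0

lemma rpow_mul_rpow_le_dyadic {t θ κ : ℝ} (ht : 0 < t) (hκ : 0 ≤ κ) (k : ℕ) :
    (t / 2 ^ (k + 1)) ^ κ * ((2 ^ k : ℕ) : ℝ) ^ (1 - θ) ≤ t ^ κ * ((2 : ℝ) ^ (1 - θ - κ)) ^ k := by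
  have h2k : (0 : ℝ) < 2 ^ k := by positivity
  calc (t / 2 ^ (k + 1)) ^ κ * ((2 ^ k : ℕ) : ℝ) ^ (1 - θ)
      ≤ (t / 2 ^ k) ^ κ * ((2 : ℝ) ^ k) ^ (1 - θ) := by
        push_cast
        gcongr
        · norm_num
        · exact k.le_succ
    _ = t ^ κ * ((2 : ℝ) ^ (1 - θ - κ)) ^ k := by
        rw [Real.div_rpow ht.le h2k.le, Real.rpow_pow_comm zero_le_two, div_mul_eq_mul_div,
          mul_div_assoc, ← Real.rpow_sub h2k]

lemma rpow_neg_mul_rpow_le_div_rpow_mul {h τ θ e κ : ℝ} (hh : 0 < h) (hhτ : h ≤ τ)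
    (hθ : θ ≤ e) : τ ^ (-e) * h ^ (e + κ) ≤ (h / τ) ^ θ * h ^ κ := by
  have hτ : 0 < τ := hh.trans_le hhτ
  calc τ ^ (-e) * h ^ (e + κ) = (h / τ) ^ e * h ^ κ := by
        rw [Real.rpow_add hh, Real.div_rpow hh.le hτ.le, Real.rpow_neg hτ.le]; ring
    _ ≤ (h / τ) ^ θ * h ^ κ := mul_le_mul_of_nonneg_right
        (Real.rpow_le_rpow_of_exponent_ge (div_pos hh hτ) (div_le_one_of_le₀ hhτ hτ.le) hθ)
        (Real.rpow_nonneg hh.le κ)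

namespace ScaleSemigroup

variable {𝓑 : BanachScale}

def SmoothsWith (Sg : ScaleSemigroup 𝓑) (T η ρ C : ℝ) : Prop :=
  ∀ τ x, 0 < τ → τ ≤ T → 𝓑.Mem η x →
    𝓑.Mem ρ (Sg.S τ x) ∧ 𝓑.N ρ (Sg.S τ x) ≤ C * τ ^ (η - ρ) * 𝓑.N η x

variable {Sg : ScaleSemigroup 𝓑} {T η μ ρ C C' : ℝ}

lemma SmoothsWith.mono (hS : Sg.SmoothsWith T η ρ C) (hCC' : C ≤ C') :
    Sg.SmoothsWith T η ρ C' := by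
  intro τ x hτ hτT hx
  refine ⟨(hS τ x hτ hτT hx).1, (hS τ x hτ hτT hx).2.trans ?_⟩
  gcongr
  exact 𝓑.N_nonneg η x

lemma SmoothsWith.comp (h₁ : Sg.SmoothsWith T η μ C) (h₂ : Sg.SmoothsWith T μ ρ C')
    (hC' : 0 ≤ C') : Sg.SmoothsWith T η ρ (C' * C * 2 ^ (ρ - η)) := by
  intro τ x hτ hτT hx
  have hτ2 : 0 < τ / 2 := half_pos hτ
  obtain ⟨hm₁, hN₁⟩ := h₁ (τ / 2) x hτ2 (by linarith) hx
  obtain ⟨hm₂, hN₂⟩ := h₂ (τ / 2) _ hτ2 (by linarith) hm₁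
  rw [← add_halves τ, Sg.S_comp _ _ hτ2.le hτ2.le, add_halves]
  refine ⟨hm₂, hN₂.trans ?_⟩
  calc C' * (τ / 2) ^ (μ - ρ) * 𝓑.N μ (Sg.S (τ / 2) x)
      ≤ C' * (τ / 2) ^ (μ - ρ) * (C * (τ / 2) ^ (η - μ) * 𝓑.N η x) := by gcongr
    _ = C' * C * ((τ / 2) ^ (μ - ρ) * (τ / 2) ^ (η - μ)) * 𝓑.N η x := by ring
    _ = C' * C * 2 ^ (ρ - η) * τ ^ (η - ρ) * 𝓑.N η x := by
        rw [← Real.rpow_add hτ2, Real.div_rpow hτ.le zero_le_two, div_eq_mul_inv,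
          ← Real.rpow_neg zero_le_two]
        ring_nf

lemma smoothsWith_of_le_add_one (hT : 0 < T) (hηρ : η ≤ ρ) (hρη : ρ ≤ η + 1) :
    ∃ C > 0, Sg.SmoothsWith T η ρ C := by
  obtain ⟨C, hC, hS⟩ := Sg.S_smoothing η (ρ - η) T (by linarith) (by linarith) hT
  exact ⟨C, hC, fun τ x hτ hτT hx => by simpa [neg_sub] using hS τ x hτ hτT hx⟩

lemma exists_smoothsWith (hT : 0 < T) (hηρ : η ≤ ρ) (hρη : ρ ≤ η + 2) :
    ∃ C > 0, Sg.SmoothsWith T η ρ C := by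
  rcases le_or_gt ρ (η + 1) with hρ | hρ
  · exact smoothsWith_of_le_add_one hT hηρ hρ
  obtain ⟨C, hC, h₁⟩ := smoothsWith_of_le_add_one (Sg := Sg) hT (η := η) (ρ := η + 1)
    (by linarith) le_rfl
  obtain ⟨C', hC', h₂⟩ := smoothsWith_of_le_add_one (Sg := Sg) hT hρ.le (by linarith)
  exact ⟨_, by positivity, h₁.comp h₂ hC'.le⟩

/-- A gain `h ^ (ρ - η + κ)` in the size of `c • v` pays for the smoothing loss `τ ^ (η - ρ)`,
leaving `h ^ κ` and the ratio `(h / τ) ^ θ ≤ 1`. -/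
lemma SmoothsWith.mem_smul_and_N_le (hS : Sg.SmoothsWith T η ρ C) (hC : 0 ≤ C) {c : ℝ}
    {v : 𝓑.E} {A B p q h τ θ κ : ℝ} (hv : 𝓑.Mem η v ∧ 𝓑.N η v ≤ B * h ^ q)
    (hc : |c| ≤ A * h ^ p) (hpq : p + q = ρ - η + κ) (hh : 0 < h) (hhτ : h ≤ τ) (hτT : τ ≤ T)
    (hθ : θ ≤ ρ - η) :
    𝓑.Mem ρ (Sg.S τ (c • v)) ∧ 𝓑.N ρ (Sg.S τ (c • v)) ≤ C * (A * B) * ((h / τ) ^ θ * h ^ κ) := by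
  have hcv := N_smul_le_mul_rpow hh hc hv.2 hpq
  have hAB : 0 ≤ A * B :=
    nonneg_of_mul_nonneg_left ((𝓑.N_nonneg η _).trans hcv) (Real.rpow_pos_of_pos hh _)
  have hτ : 0 < τ := hh.trans_le hhτ
  obtain ⟨hmem, hN⟩ := hS τ _ hτ hτT (𝓑.mem_smul _ _ _ hv.1)
  refine ⟨hmem, hN.trans ?_⟩
  calc C * τ ^ (η - ρ) * 𝓑.N η (c • v) ≤ C * τ ^ (η - ρ) * (A * B * h ^ (ρ - η + κ)) := by
        gcongr
    _ = C * (A * B) * (τ ^ (-(ρ - η)) * h ^ (ρ - η + κ)) := by rw [neg_sub]; ring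
    _ ≤ C * (A * B) * ((h / τ) ^ θ * h ^ κ) :=
        mul_le_mul_of_nonneg_left (rpow_neg_mul_rpow_le_div_rpow_mul hh hhτ hθ) (mul_nonneg hC hAB)

lemma exists_mem_sub_S_and_N_le (hT : 0 < T) (μ : ℝ) :
    ∃ C > 0, ∀ h x, 0 < h → h ≤ T → 𝓑.Mem μ x →
      𝓑.Mem (μ - 1) (x - Sg.S h x) ∧
        𝓑.N (μ - 1) (x - Sg.S h x) ≤ C * 𝓑.N μ x * h ^ (1 : ℝ) := by
  obtain ⟨C, hC, hS⟩ := Sg.S_holdId (μ - 1) 1 T zero_le_one le_rfl hT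
  refine ⟨C, hC, fun h x hh hhT hx => ⟨?_, ?_⟩⟩
  · exact 𝓑.mem_mono (by linarith) _ (mem_sub hx (Sg.S_mem h μ x hh.le hx))
  · have := hS h x hh hhT (by rwa [sub_add_cancel])
    rwa [sub_add_cancel, N_sub_comm, mul_right_comm] at this

end ScaleSemigroup

lemma le_scaleSupNorm {𝓑 : BanachScale} {θ T : ℝ} {f : ℝ → 𝓑.E}
    (hmem : ∀ t, 0 ≤ t → t ≤ T → 𝓑.Mem θ (f t))
    (hcont : ∀ t, 0 ≤ t → t ≤ T → ∀ ε > (0:ℝ), ∃ δ > (0:ℝ), ∀ s, 0 ≤ s → s ≤ T →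
      |s - t| < δ → 𝓑.N θ (f s - f t) < ε) {t : ℝ} (ht : 0 ≤ t) (htT : t ≤ T) :
    𝓑.N θ (f t) ≤ scaleSupNorm 𝓑 θ T f := by
  have hcont' : ContinuousOn (fun s => 𝓑.N θ (f s)) (Icc 0 T) := by
    intro t₀ ht₀
    rw [Metric.continuousWithinAt_iff]
    intro ε hε
    obtain ⟨δ, hδ, hδ'⟩ := hcont t₀ ht₀.1 ht₀.2 ε hε
    exact ⟨δ, hδ, fun {s} hs hd =>
      (abs_N_sub_N_le (hmem s hs.1 hs.2) (hmem t₀ ht₀.1 ht₀.2)).trans_lt (hδ' s hs.1 hs.2 hd)⟩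
  refine le_csSup ((isCompact_Icc.bddAbove_image hcont').mono ?_) ⟨t, ht, htT, rfl⟩
  rintro _ ⟨s, hs, hsT, rfl⟩
  exact ⟨s, ⟨hs, hsT⟩, rfl⟩

lemma scaleSupNorm_le {𝓑 : BanachScale} {θ T M : ℝ} {f : ℝ → 𝓑.E} (hM : 0 ≤ M)
    (hf : ∀ t, 0 ≤ t → t ≤ T → 𝓑.N θ (f t) ≤ M) : scaleSupNorm 𝓑 θ T f ≤ M :=
  Real.sSup_le (fun _ ⟨t, ht, htT, hr⟩ => hr ▸ hf t ht htT) hM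

lemma scaleSupNorm_nonneg (𝓑 : BanachScale) (θ T : ℝ) (f : ℝ → 𝓑.E) :
    0 ≤ scaleSupNorm 𝓑 θ T f :=
  Real.sSup_nonneg fun _ ⟨_, _, _, hr⟩ => hr ▸ 𝓑.N_nonneg _ _

lemma scaleHolderNorm2_nonneg (𝓑 : BanachScale) (θ η T : ℝ) (F : ℝ → ℝ → 𝓑.E) :
    0 ≤ scaleHolderNorm2 𝓑 θ η T F :=
  Real.sSup_nonneg fun _ ⟨_, _, _, hst, _, hr⟩ =>
    hr ▸ div_nonneg (𝓑.N_nonneg _ _) (Real.rpow_nonneg (sub_nonneg.mpr hst.le) _)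

lemma N_le_scaleHolderNorm2_mul {𝓑 : BanachScale} {θ η T : ℝ} {F : ℝ → ℝ → 𝓑.E}
    (hF : ∃ C, ∀ s t, 0 ≤ s → s ≤ t → t ≤ T → 𝓑.N θ (F s t) ≤ C * (t - s) ^ η)
    {s t : ℝ} (hs : 0 ≤ s) (hst : s < t) (htT : t ≤ T) :
    𝓑.N θ (F s t) ≤ scaleHolderNorm2 𝓑 θ η T F * (t - s) ^ η := by
  obtain ⟨C, hC⟩ := hF
  have hbdd : BddAbove {r | ∃ s t, 0 ≤ s ∧ s < t ∧ t ≤ T ∧ r = 𝓑.N θ (F s t) / (t - s) ^ η} := by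
    refine ⟨C, ?_⟩
    rintro _ ⟨s', t', hs', hst', ht'T, rfl⟩
    exact (div_le_iff₀ (Real.rpow_pos_of_pos (sub_pos.mpr hst') η)).mpr (hC s' t' hs' hst'.le ht'T)
  rw [← div_le_iff₀ (Real.rpow_pos_of_pos (sub_pos.mpr hst) η)]
  exact le_csSup hbdd ⟨s, t, hs, hst, htT, rfl⟩

lemma crpNorm_summands_nonneg (𝓑 : BanachScale) (α γ T : ℝ) (X : ℝ → ℝ) (y y' : ℝ → 𝓑.E) :
    0 ≤ scaleSupNorm 𝓑 γ T y ∧ 0 ≤ scaleSupNorm 𝓑 (γ - α) T y' ∧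
      0 ≤ scaleHolderNorm 𝓑 (γ - 2 * α) α T y' ∧
      0 ≤ scaleHolderNorm2 𝓑 (γ - α) α T (gubRemainder 𝓑 X y y') ∧
      0 ≤ scaleHolderNorm2 𝓑 (γ - 2 * α) (2 * α) T (gubRemainder 𝓑 X y y') :=
  ⟨scaleSupNorm_nonneg .., scaleSupNorm_nonneg .., scaleHolderNorm2_nonneg ..,
    scaleHolderNorm2_nonneg .., scaleHolderNorm2_nonneg ..⟩

lemma crpNorm_nonneg (𝓑 : BanachScale) (α γ T : ℝ) (X : ℝ → ℝ) (y y' : ℝ → 𝓑.E) :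
    0 ≤ crpNorm 𝓑 α γ T X y y' := by
  obtain ⟨h₁, h₂, h₃, h₄, h₅⟩ := crpNorm_summands_nonneg 𝓑 α γ T X y y'
  unfold crpNorm; linarith

namespace IsControlledPath

variable {𝓑 : BanachScale} {α γ T : ℝ} {X : ℝ → ℝ} {y y' : ℝ → 𝓑.E}

lemma N_le_crpNorm (hy : IsControlledPath 𝓑 α γ T X y y') {t : ℝ} (ht : 0 ≤ t) (htT : t ≤ T) :
    𝓑.N γ (y t) ≤ crpNorm 𝓑 α γ T X y y' := by
  obtain ⟨-, h₂, h₃, h₄, h₅⟩ := crpNorm_summands_nonneg 𝓑 α γ T X y y'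
  have := le_scaleSupNorm hy.mem_y hy.cont_y ht htT
  unfold crpNorm; linarith

lemma N_deriv_le_crpNorm (hy : IsControlledPath 𝓑 α γ T X y y') {t : ℝ} (ht : 0 ≤ t)
    (htT : t ≤ T) : 𝓑.N (γ - α) (y' t) ≤ crpNorm 𝓑 α γ T X y y' := by
  obtain ⟨h₁, -, h₃, h₄, h₅⟩ := crpNorm_summands_nonneg 𝓑 α γ T X y y'
  have := le_scaleSupNorm hy.mem_y' hy.cont_y' ht htT
  unfold crpNorm; linarith

lemma mem_deriv_sub_and_N_le (hy : IsControlledPath 𝓑 α γ T X y y') (hα : 0 ≤ α) {s h : ℝ}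
    (hs : 0 ≤ s) (hh : 0 < h) (hsh : s + h ≤ T) :
    𝓑.Mem (γ - 2 * α) (y' (s + h) - y' s) ∧
      𝓑.N (γ - 2 * α) (y' (s + h) - y' s) ≤ crpNorm 𝓑 α γ T X y y' * h ^ α := by
  refine ⟨𝓑.mem_mono (by linarith) _ (mem_sub (hy.mem_y' _ (by linarith) hsh)
    (hy.mem_y' s hs (by linarith))), ?_⟩
  obtain ⟨h₁, h₂, -, h₄, h₅⟩ := crpNorm_summands_nonneg 𝓑 α γ T X y y'
  have hF := N_le_scaleHolderNorm2_mul (F := fun s t => y' t - y' s) hy.holder_y' hs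
    (lt_add_of_pos_right s hh) hsh
  rw [add_sub_cancel_left] at hF
  refine hF.trans (mul_le_mul_of_nonneg_right ?_ (Real.rpow_nonneg hh.le α))
  unfold crpNorm scaleHolderNorm at *; linarith

lemma mem_remainder_and_N_le (hy : IsControlledPath 𝓑 α γ T X y y') (hα : 0 ≤ α) {s h : ℝ}
    (hs : 0 ≤ s) (hh : 0 < h) (hsh : s + h ≤ T) :
    𝓑.Mem (γ - 2 * α) (gubRemainder 𝓑 X y y' s (s + h)) ∧
      𝓑.N (γ - 2 * α) (gubRemainder 𝓑 X y y' s (s + h))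
        ≤ crpNorm 𝓑 α γ T X y y' * h ^ (2 * α) := by
  refine ⟨mem_sub (mem_sub (𝓑.mem_mono (by linarith) _ (hy.mem_y _ (by linarith) hsh))
    (𝓑.mem_mono (by linarith) _ (hy.mem_y s hs (by linarith))))
    (𝓑.mem_smul _ _ _ (𝓑.mem_mono (by linarith) _ (hy.mem_y' s hs (by linarith)))), ?_⟩
  obtain ⟨h₁, h₂, h₃, h₄, -⟩ := crpNorm_summands_nonneg 𝓑 α γ T X y y'
  have hF := N_le_scaleHolderNorm2_mul hy.rem_two_alpha hs (lt_add_of_pos_right s hh) hsh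
  rw [add_sub_cancel_left] at hF
  refine hF.trans (mul_le_mul_of_nonneg_right ?_ (Real.rpow_nonneg hh.le _))
  unfold crpNorm; linarith

end IsControlledPath

lemma RoughPath.exists_bound {α T : ℝ} (RP : RoughPath α T) :
    ∃ C ≥ 0, ∀ s h, 0 ≤ s → 0 ≤ h → s + h ≤ T →
      |RP.X (s + h) - RP.X s| ≤ C * h ^ α ∧ |RP.X2 s (s + h)| ≤ C * h ^ (2 * α) := by
  obtain ⟨C₁, hC₁⟩ := RP.holderX
  obtain ⟨C₂, hC₂⟩ := RP.holderX2
  refine ⟨max (max C₁ C₂) 0, le_max_right _ _, fun s h hs hh hsh => ?_⟩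
  have h₁ := hC₁ s (s + h) hs (by linarith) hsh
  have h₂ := hC₂ s (s + h) hs (by linarith) hsh
  rw [add_sub_cancel_left] at h₁ h₂
  constructor
  · exact h₁.trans (by gcongr; exact (le_max_left _ _).trans (le_max_left _ _))
  · exact h₂.trans (by gcongr; exact (le_max_right _ _).trans (le_max_left _ _))

def germDefect {E : Type*} [AddCommGroup E] (Ξ : ℝ → ℝ → E) (a m b : ℝ) : E :=
  Ξ a m + Ξ m b - Ξ a b

-- `i + 1` is cast from `ℕ` so that this is definitionally the sum over `dyadicPartition t ht k`.
noncomputable def dyadicSum {E : Type*} [AddCommMonoid E] (Ξ : ℝ → ℝ → E) (t : ℝ) (k : ℕ) : E :=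
  ∑ i ∈ Finset.range (2 ^ k), Ξ (i * (t / 2 ^ k)) ((i + 1 : ℕ) * (t / 2 ^ k))

lemma dyadicSum_zero {E : Type*} [AddCommMonoid E] (Ξ : ℝ → ℝ → E) (t : ℝ) :
    dyadicSum Ξ t 0 = Ξ 0 t := by
  simp [dyadicSum]

lemma sum_range_two_mul_sub_sum_range {E : Type*} [AddCommGroup E] (Ξ : ℝ → ℝ → E)
    {p q : ℕ → ℝ} (hpq : ∀ i, q (2 * i) = p i) (n : ℕ) :
    ∑ j ∈ Finset.range (2 * n), Ξ (q j) (q (j + 1)) - ∑ i ∈ Finset.range n, Ξ (p i) (p (i + 1))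
      = ∑ i ∈ Finset.range n, germDefect Ξ (q (2 * i)) (q (2 * i + 1)) (q (2 * i + 1 + 1)) := by
  induction n with
  | zero => simp
  | succ n ih =>
    rw [mul_add, mul_one, Finset.sum_range_succ, Finset.sum_range_succ, Finset.sum_range_succ,
      Finset.sum_range_succ, ← ih, germDefect, hpq, ← hpq (n + 1),
      show 2 * (n + 1) = 2 * n + 1 + 1 by ring]
    abel

lemma mem_dyadicSum_succ_sub_and_N_le {𝓑 : BanachScale} {Ξ : ℝ → ℝ → 𝓑.E} {ρ K θ κ t : ℝ}
    (ht : 0 < t) (hθ0 : 0 ≤ θ) (hθ1 : θ < 1) (hκ : 0 ≤ κ) (hK : 0 ≤ K)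
    (hΞ : ∀ a h, 0 ≤ a → 0 < h → a + h + h ≤ t →
      𝓑.Mem ρ (germDefect Ξ a (a + h) (a + h + h)) ∧
      𝓑.N ρ (germDefect Ξ a (a + h) (a + h + h)) ≤ K * ((h / (t - (a + h))) ^ θ * h ^ κ))
    (k : ℕ) :
    𝓑.Mem ρ (dyadicSum Ξ t (k + 1) - dyadicSum Ξ t k) ∧
      𝓑.N ρ (dyadicSum Ξ t (k + 1) - dyadicSum Ξ t k)
        ≤ K / (1 - θ) * t ^ κ * ((2 : ℝ) ^ (1 - θ - κ)) ^ k := by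
  set h := t / 2 ^ (k + 1) with h_def
  have hh : 0 < h := by positivity
  have ht' : t = 2 * ((2 ^ k : ℕ) : ℝ) * h := by rw [h_def]; push_cast; field_simp; ring
  have hdiff : dyadicSum Ξ t (k + 1) - dyadicSum Ξ t k = ∑ i ∈ Finset.range (2 ^ k),
      germDefect Ξ (2 * i * h) (2 * i * h + h) (2 * i * h + h + h) := by
    have := sum_range_two_mul_sub_sum_range Ξ (p := fun i : ℕ => (i : ℝ) * (t / 2 ^ k))
      (q := fun j : ℕ => (j : ℝ) * h) (fun i => by rw [h_def]; push_cast; field_simp; ring) (2 ^ k)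
    rw [← pow_succ'] at this
    rw [dyadicSum, dyadicSum, this]
    exact Finset.sum_congr rfl fun i _ => by congr 1 <;> push_cast <;> ring
  have hΞi : ∀ i ∈ Finset.range (2 ^ k), _ := fun i hi => by
    have : ((i + 1 : ℕ) : ℝ) ≤ ((2 ^ k : ℕ) : ℝ) := by exact_mod_cast Finset.mem_range.mp hi
    push_cast at this
    exact hΞ (2 * i * h) h (by positivity) hh (by rw [ht']; push_cast; nlinarith)
  rw [hdiff]
  refine ⟨mem_sum _ fun i hi => (hΞi i hi).1, ?_⟩
  calc _ ≤ ∑ i ∈ Finset.range (2 ^ k), K * ((h / (t - (2 * i * h + h))) ^ θ * h ^ κ) :=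
        (N_sum_le _ fun i hi => (hΞi i hi).1).trans (Finset.sum_le_sum fun i hi => (hΞi i hi).2)
    _ = K * h ^ κ * ∑ i ∈ Finset.range (2 ^ k),
          (h / (2 * ((2 ^ k : ℕ) : ℝ) * h - (2 * i * h + h))) ^ θ := by
        rw [Finset.mul_sum, ← ht']
        exact Finset.sum_congr rfl fun i _ => by ring
    _ ≤ K * h ^ κ * (((2 ^ k : ℕ) : ℝ) ^ (1 - θ) / (1 - θ)) := by
        gcongr
        exact sum_range_div_rpow_le hθ0 hθ1 hh _
    _ = K / (1 - θ) * (h ^ κ * ((2 ^ k : ℕ) : ℝ) ^ (1 - θ)) := by ring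
    _ ≤ K / (1 - θ) * t ^ κ * ((2 : ℝ) ^ (1 - θ - κ)) ^ k := by
        rw [mul_assoc]
        exact mul_le_mul_of_nonneg_left (rpow_mul_rpow_le_dyadic ht hκ k)
          (div_nonneg hK (by linarith))

def convGerm (𝓑 : BanachScale) (Sg : ScaleSemigroup 𝓑) (X : ℝ → ℝ) (X2 : ℝ → ℝ → ℝ)
    (y y' : ℝ → 𝓑.E) (t a b : ℝ) : 𝓑.E :=
  Sg.S (t - a) ((X b - X a) • y a + X2 a b • y' a)

noncomputable def dyadicPartition (t : ℝ) (ht : 0 < t) (k : ℕ) : RPartition 0 t where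
  n := 2 ^ k
  t i := i * (t / 2 ^ k)
  n_pos := by positivity
  strict i _ := by gcongr; simp
  first := by simp
  last := by push_cast; field_simp

lemma dyadicPartition_mesh (t : ℝ) (ht : 0 < t) (k : ℕ) :
    (dyadicPartition t ht k).mesh = t / 2 ^ k := by
  have : {r : ℝ | ∃ i, i < (dyadicPartition t ht k).n ∧
      r = (dyadicPartition t ht k).t (i + 1) - (dyadicPartition t ht k).t i} = {t / 2 ^ k} := by
    ext r
    simp only [dyadicPartition, mem_ofPred_eq, mem_singleton_iff]
    push_cast
    exact ⟨fun ⟨_, _, hr⟩ => by rw [hr]; ring, fun hr => ⟨0, by positivity, by rw [hr]; ring⟩⟩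
  rw [RPartition.mesh, this, csSup_singleton]

section Germ

variable {𝓑 : BanachScale} {Sg : ScaleSemigroup 𝓑} {X : ℝ → ℝ} {X2 : ℝ → ℝ → ℝ}
  {y y' : ℝ → 𝓑.E}

lemma convRiemannSum_dyadicPartition (t : ℝ) (ht : 0 < t) (k : ℕ) :
    convRiemannSum 𝓑 Sg X X2 y y' (dyadicPartition t ht k)
      = dyadicSum (convGerm 𝓑 Sg X X2 y y' t) t k := rfl

lemma IsRoughConvolution.tendsto_dyadicSum {θ t : ℝ} {I : 𝓑.E}
    (hI : IsRoughConvolution 𝓑 Sg X X2 y y' θ 0 t I) (ht : 0 < t) :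
    Tendsto (fun k => 𝓑.N θ (dyadicSum (convGerm 𝓑 Sg X X2 y y' t) t k - I)) atTop (𝓝 0) := by
  rw [tendsto_N_sub_iff]
  intro ε hε
  obtain ⟨δ, hδ, hπ⟩ := hI.2 (ε / 2) (half_pos hε)
  have hmesh : Tendsto (fun k : ℕ => t / 2 ^ k) atTop (𝓝 0) := by
    simpa [div_eq_mul_inv] using
      (tendsto_pow_atTop_nhds_zero_of_lt_one (r := (2 : ℝ)⁻¹) (by norm_num)
        (by norm_num)).const_mul t
  obtain ⟨M, hM⟩ := eventually_atTop.mp (hmesh.eventually (gt_mem_nhds hδ))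
  refine ⟨M, fun k hk => ?_⟩
  rw [← convRiemannSum_dyadicPartition t ht k]
  exact (hπ _ ((dyadicPartition_mesh t ht k).trans_lt (hM k hk))).trans_lt (half_lt_self hε)

lemma germDefect_convGerm_eq {t a m b : ℝ} (ham : a ≤ m) (hmt : m ≤ t)
    (hchen : X2 a b - X2 a m - X2 m b = (X m - X a) * (X b - X m)) :
    germDefect (convGerm 𝓑 Sg X X2 y y' t) a m b
      = Sg.S (t - m) ((X b - X m) • gubRemainder 𝓑 X y y' a m
          + (X m - X a) • (X b - X m) • (y' a - Sg.S (m - a) (y' a))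
          + (X b - X m) • (y a - Sg.S (m - a) (y a))
          + X2 m b • (y' m - y' a)
          + X2 m b • (y' a - Sg.S (m - a) (y' a))) := by
  have hS : ∀ x, Sg.S (t - a) x = Sg.S (t - m) (Sg.S (m - a) x) := fun x => by
    rw [← Sg.S_comp _ _ (sub_nonneg.mpr hmt) (sub_nonneg.mpr ham), sub_add_sub_cancel]
  have hX2 : X2 a b = X2 a m + X2 m b + (X m - X a) * (X b - X m) := by linarith
  simp only [germDefect, convGerm, gubRemainder, hS, hX2, map_add, map_smul, map_sub]
  module

end Germ

theorem exists_N_convGerm_le {α T γ σ : ℝ} (hα : 0 ≤ α) (hσ : 0 ≤ σ) (hασ : α + σ ≤ 1)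
    (hT : 0 < T) (𝓑 : BanachScale) (Sg : ScaleSemigroup 𝓑) (RP : RoughPath α T) :
    ∃ K ≥ 0, ∀ y y' : ℝ → 𝓑.E, 𝓑.Mem γ (y 0) → 𝓑.Mem (γ - α) (y' 0) → ∀ t, 0 < t → t ≤ T →
      𝓑.Mem (γ + σ) (convGerm 𝓑 Sg RP.X RP.X2 y y' t 0 t) ∧
      𝓑.N (γ + σ) (convGerm 𝓑 Sg RP.X RP.X2 y y' t 0 t)
        ≤ K * t ^ (α - σ) * (𝓑.N γ (y 0) + 𝓑.N (γ - α) (y' 0)) := by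
  obtain ⟨Cx, hCx, hX⟩ := RP.exists_bound
  obtain ⟨C₁, hC₁, hS₁⟩ := Sg.exists_smoothsWith (η := γ) (ρ := γ + σ) hT (by linarith)
    (by linarith)
  obtain ⟨C₂, hC₂, hS₂⟩ := Sg.exists_smoothsWith (η := γ - α) (ρ := γ + σ) hT (by linarith)
    (by linarith)
  refine ⟨(C₁ + C₂) * Cx, by positivity, fun y y' hy hy' t ht htT => ?_⟩
  obtain ⟨hXt, hX2t⟩ := hX 0 t le_rfl ht.le (by simpa using htT)
  rw [zero_add] at hXt hX2t
  have p₁ := hS₁.mem_smul_and_N_le hC₁.le (B := 𝓑.N γ (y 0)) (q := 0) ⟨hy, by simp⟩ hXt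
    (κ := α - σ) (by ring) ht le_rfl htT (θ := 0) (by linarith)
  have p₂ := hS₂.mem_smul_and_N_le hC₂.le (B := 𝓑.N (γ - α) (y' 0)) (q := 0) ⟨hy', by simp⟩ hX2t
    (κ := α - σ) (by ring) ht le_rfl htT (θ := 0) (by linarith)
  have := mem_add_and_N_add_le p₁ p₂
  rw [convGerm, sub_zero, map_add]
  refine ⟨this.1, this.2.trans ?_⟩
  simp only [Real.rpow_zero, one_mul]
  have h₁ := 𝓑.N_nonneg γ (y 0)
  have h₂ := 𝓑.N_nonneg (γ - α) (y' 0)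
  have ht' := Real.rpow_nonneg ht.le (α - σ)
  nlinarith [mul_nonneg (mul_nonneg hC₁.le hCx) (mul_nonneg ht' h₂),
    mul_nonneg (mul_nonneg hC₂.le hCx) (mul_nonneg ht' h₁)]

theorem exists_N_germDefect_convGerm_le {α T γ σ θ : ℝ} (hα : 0 ≤ α) (hσ : 0 ≤ σ)
    (hασ : α + σ ≤ 1) (hT : 0 < T) (hθ : θ ≤ 2 * α + σ) (hθ' : θ ≤ 1 + σ) (𝓑 : BanachScale)
    (Sg : ScaleSemigroup 𝓑) (RP : RoughPath α T) :
    ∃ K ≥ 0, ∀ y y', IsControlledPath 𝓑 α γ T RP.X y y' → ∀ t a h, 0 ≤ a → 0 < h →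
      a + h + h ≤ t → t ≤ T →
      𝓑.Mem (γ + σ) (germDefect (convGerm 𝓑 Sg RP.X RP.X2 y y' t) a (a + h) (a + h + h)) ∧
      𝓑.N (γ + σ) (germDefect (convGerm 𝓑 Sg RP.X RP.X2 y y' t) a (a + h) (a + h + h))
        ≤ K * crpNorm 𝓑 α γ T RP.X y y' * ((h / (t - (a + h))) ^ θ * h ^ (α - σ)) := by
  obtain ⟨Cx, hCx, hX⟩ := RP.exists_bound
  obtain ⟨Cs, hCs, hS⟩ := (Set.toFinite {γ - 2 * α, γ - α - 1, γ - 1}).exists_forall_of_monotone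
    (P := fun η C => Sg.SmoothsWith T η (γ + σ) C) (fun _ _ _ hC hS => hS.mono hC)
    (by rintro η (rfl | rfl | rfl) <;>
      exact (Sg.exists_smoothsWith hT (by linarith) (by linarith)).imp fun _ h => h.2)
  obtain ⟨Ch, hCh, hI⟩ := (Set.toFinite {γ, γ - α}).exists_forall_of_monotone
    (P := fun μ C => ∀ h x, 0 < h → h ≤ T → 𝓑.Mem μ x →
      𝓑.Mem (μ - 1) (x - Sg.S h x) ∧
        𝓑.N (μ - 1) (x - Sg.S h x) ≤ C * 𝓑.N μ x * h ^ (1 : ℝ))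
    (fun _ _ _ hC hI h x hh hhT hx => ⟨(hI h x hh hhT hx).1, (hI h x hh hhT hx).2.trans
      (by gcongr; exact 𝓑.N_nonneg _ _)⟩)
    (fun μ _ => (Sg.exists_mem_sub_S_and_N_le hT μ).imp fun _ h => h.2)
  refine ⟨Cs * Cx * (2 + Cx * Ch + 2 * Ch), by positivity, ?_⟩
  intro y y' hy t a h ha hh hht htT
  set Λ := crpNorm 𝓑 α γ T RP.X y y'
  have hτ : h ≤ t - (a + h) := by linarith
  have hτT : t - (a + h) ≤ T := by linarith
  have hdy : 𝓑.Mem (γ - 1) (y a - Sg.S h (y a)) ∧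
      𝓑.N (γ - 1) (y a - Sg.S h (y a)) ≤ (Ch * Λ) * h ^ (1 : ℝ) := by
    obtain ⟨hmem, hN⟩ := hI γ (by simp) h (y a) hh (by linarith) (hy.mem_y a ha (by linarith))
    exact ⟨hmem, hN.trans (by gcongr; exact hy.N_le_crpNorm ha (by linarith))⟩
  have hdy' : 𝓑.Mem (γ - α - 1) (y' a - Sg.S h (y' a)) ∧
      𝓑.N (γ - α - 1) (y' a - Sg.S h (y' a)) ≤ (Ch * Λ) * h ^ (1 : ℝ) := by
    obtain ⟨hmem, hN⟩ := hI (γ - α) (by simp) h (y' a) hh (by linarith)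
      (hy.mem_y' a ha (by linarith))
    exact ⟨hmem, hN.trans (by gcongr; exact hy.N_deriv_le_crpNorm ha (by linarith))⟩
  obtain ⟨hXam, -⟩ := hX a h ha hh.le (by linarith)
  obtain ⟨hXmb, hX2mb⟩ := hX (a + h) h (by linarith) hh.le (by linarith)
  have hchen := RP.chen a (a + h) (a + h + h) ha (by linarith) (by linarith) (by linarith)
  rw [germDefect_convGerm_eq (by linarith) (by linarith) hchen, add_sub_cancel_left]
  simp only [map_add]
  have p₁ := (hS _ (by simp)).mem_smul_and_N_le hCs
    (hy.mem_remainder_and_N_le hα ha hh (by linarith)) hXmb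
    (κ := α - σ) (by ring) hh hτ hτT (θ := θ) (by linarith)
  have p₂ := (hS _ (by simp)).mem_smul_and_N_le hCs
    ⟨𝓑.mem_smul _ _ _ hdy'.1, N_smul_le_mul_rpow hh hXmb hdy'.2 rfl⟩ hXam
    (κ := α - σ) (by ring) hh hτ hτT (θ := θ) (by linarith)
  have p₃ := (hS _ (by simp)).mem_smul_and_N_le hCs hdy hXmb
    (κ := α - σ) (by ring) hh hτ hτT (θ := θ) (by linarith)
  have p₄ := (hS _ (by simp)).mem_smul_and_N_le hCs
    (hy.mem_deriv_sub_and_N_le hα ha hh (by linarith)) hX2mb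
    (κ := α - σ) (by ring) hh hτ hτT (θ := θ) (by linarith)
  have p₅ := (hS _ (by simp)).mem_smul_and_N_le hCs hdy' hX2mb
    (κ := α - σ) (by ring) hh hτ hτT (θ := θ) (by linarith)
  have := mem_add_and_N_add_le (mem_add_and_N_add_le (mem_add_and_N_add_le
    (mem_add_and_N_add_le p₁ p₂) p₃) p₄) p₅
  exact ⟨this.1, this.2.trans_eq (by ring)⟩

theorem exists_N_roughConvolution_le {α T γ σ ρ : ℝ} (hα : 1 / 3 < α) (hσ : 0 ≤ σ) (hσα : σ < α)
    (hασ : α + σ ≤ 1) (hT : 0 < T) (hρ : ρ ≤ γ + σ) (𝓑 : BanachScale) (Sg : ScaleSemigroup 𝓑)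
    (RP : RoughPath α T) :
    ∃ C > 0, ∀ y y', IsControlledPath 𝓑 α γ T RP.X y y' → ∀ t I, 0 < t → t ≤ T →
      IsRoughConvolution 𝓑 Sg RP.X RP.X2 y y' ρ 0 t I →
      𝓑.N (γ + σ) I ≤ C * t ^ (α - σ)
        * (𝓑.N γ (y 0) + 𝓑.N (γ - α) (y' 0) + crpNorm 𝓑 α γ T RP.X y y') := by
  -- level `k` carries defects `≲ 2^{k(1-θ)} h^{α-σ}`, `h = t/2^{k+1}`: decay needs `θ + (α-σ) > 1`
  obtain ⟨θ, hθκ, hθmin⟩ :=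
    exists_between (lt_min (by linarith) (by linarith) : 1 - (α - σ) < min (2 * α + σ) 1)
  obtain ⟨hθα, hθ1⟩ := lt_min_iff.mp hθmin
  have hθ0 : 0 ≤ θ := by linarith
  set r : ℝ := 2 ^ (1 - θ - (α - σ))
  have hr0 : 0 ≤ r := by positivity
  have hr1 : r < 1 := Real.rpow_lt_one_of_one_lt_of_neg one_lt_two (by linarith)
  obtain ⟨K₀, hK₀, hbase⟩ := exists_N_convGerm_le (γ := γ) (by linarith) hσ hασ hT 𝓑 Sg RP
  obtain ⟨K, hK, hdefect⟩ := exists_N_germDefect_convGerm_le (γ := γ) (by linarith) hσ hασ hT hθα.le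
    (by linarith) 𝓑 Sg RP
  have hc : 0 ≤ K / (1 - θ) / (1 - r) := div_nonneg (div_nonneg hK (by linarith)) (by linarith)
  refine ⟨K₀ + K / (1 - θ) / (1 - r) + 1, by linarith, ?_⟩
  intro y y' hy t I ht htT hI
  set Λ := crpNorm 𝓑 α γ T RP.X y y'
  have hinc := mem_dyadicSum_succ_sub_and_N_le ht hθ0 hθ1 (by linarith)
    (mul_nonneg hK (crpNorm_nonneg ..)) (fun a h ha hh hah => hdefect y y' hy t a h ha hh hah htT)
  have hD0 := hbase y y' (hy.mem_y 0 le_rfl hT.le) (hy.mem_y' 0 le_rfl hT.le) t ht htT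
  rw [← dyadicSum_zero (convGerm 𝓑 Sg RP.X RP.X2 y y' t)] at hD0
  obtain ⟨hDmem, z, hz, hDz, hzN⟩ := exists_tendsto_of_geometric hr0 hr1 hD0.1 hinc
  obtain rfl := eq_of_tendsto hρ hDmem hI.1 hz (hI.tendsto_dyadicSum ht) hDz
  have hu := Real.rpow_nonneg ht.le (α - σ)
  have ha := 𝓑.N_nonneg γ (y 0)
  have hb := 𝓑.N_nonneg (γ - α) (y' 0)
  have hΛ := crpNorm_nonneg 𝓑 α γ T RP.X y y'
  calc 𝓑.N (γ + σ) I ≤ K₀ * t ^ (α - σ) * (𝓑.N γ (y 0) + 𝓑.N (γ - α) (y' 0))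
        + K / (1 - θ) / (1 - r) * t ^ (α - σ) * Λ :=
        hzN.trans (add_le_add hD0.2 (le_of_eq (by ring)))
    _ ≤ _ := by
        nlinarith [mul_nonneg (mul_nonneg hK₀ hu) hΛ,
          mul_nonneg (mul_nonneg hc hu) (add_nonneg ha hb),
          mul_nonneg hu (add_nonneg (add_nonneg ha hb) hΛ)]

/-- For `(y,y') ∈ D^{2α}_{X,γ}` and `0 ≤ σ < α`, the rough convolution
`z_t = ∫₀ᵗ S(t-s) y_s d𝐗_s` satisfies `‖z‖_{∞,B_{γ+σ}} ≲ T^{α-σ} ‖y,y'‖_{X,2α,γ}`;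
in particular `|z_t|_{B_{γ+σ}} ≲ t^{α-σ}(|y₀|_{B_γ} + |y'₀|_{B_{γ-α}} + ‖y,y'‖_{X,2α,γ})`
for every `t ∈ (0,T]`. -/
theorem statement9 (α T γ σ : ℝ) (hα : 1/3 < α) (hα' : α < 1/2) (hT : 0 < T)
    (hσ : 0 ≤ σ) (hσα : σ < α)
    (𝓑 : BanachScale) (Sg : ScaleSemigroup 𝓑) (RP : RoughPath α T) :
    ∃ C > (0:ℝ), ∀ y y' : ℝ → 𝓑.E, IsControlledPath 𝓑 α γ T RP.X y y' →
      ∀ z : ℝ → 𝓑.E, z 0 = 0 →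
        (∀ t : ℝ, 0 < t → t ≤ T →
          IsRoughConvolution 𝓑 Sg RP.X RP.X2 y y' (γ - 2 * α) 0 t (z t)) →
        scaleSupNorm 𝓑 (γ + σ) T z ≤ C * T ^ (α - σ) * crpNorm 𝓑 α γ T RP.X y y' ∧
        ∀ t : ℝ, 0 < t → t ≤ T →
          𝓑.N (γ + σ) (z t)
            ≤ C * t ^ (α - σ) * (𝓑.N γ (y 0) + 𝓑.N (γ - α) (y' 0)
                + crpNorm 𝓑 α γ T RP.X y y') := by
  obtain ⟨C, hC, hz⟩ := exists_N_roughConvolution_le hα hσ hσα (by linarith) hT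
    (by linarith : γ - 2 * α ≤ γ + σ) 𝓑 Sg RP
  refine ⟨3 * C, by positivity, fun y y' hy z hz0 hzconv => ⟨?_, fun t ht htT => ?_⟩⟩
  · have hΛ := crpNorm_nonneg 𝓑 α γ T RP.X y y'
    have hTκ := Real.rpow_nonneg hT.le (α - σ)
    refine scaleSupNorm_le (by positivity) fun t ht htT => ?_
    rcases ht.eq_or_lt with rfl | ht
    · rw [hz0, 𝓑.N_zero]; positivity
    have hbound := hz y y' hy t (z t) ht htT (hzconv t ht htT)
    have hy0 := hy.N_le_crpNorm le_rfl hT.le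
    have hy'0 := hy.N_deriv_le_crpNorm le_rfl hT.le
    have htκ : t ^ (α - σ) ≤ T ^ (α - σ) := Real.rpow_le_rpow ht.le htT (by linarith)
    calc 𝓑.N (γ + σ) (z t) ≤ C * t ^ (α - σ) * (3 * crpNorm 𝓑 α γ T RP.X y y') := by
          refine hbound.trans (mul_le_mul_of_nonneg_left (by linarith) (by positivity))
      _ ≤ 3 * C * T ^ (α - σ) * crpNorm 𝓑 α γ T RP.X y y' := by
          nlinarith [mul_le_mul_of_nonneg_right htκ (mul_nonneg hC.le hΛ)]
  · have hbound := hz y y' hy t (z t) ht htT (hzconv t ht htT)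
    refine hbound.trans (mul_le_mul_of_nonneg_right (by gcongr; linarith) ?_)
    linarith [𝓑.N_nonneg γ (y 0), 𝓑.N_nonneg (γ - α) (y' 0), crpNorm_nonneg 𝓑 α γ T RP.X y y']
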